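/- arXiv:1905.04365 — 2 statements merged into one kernel-verified Lean document; each statement's English description precedes it below -/
import Mathlib

section
/- Fix $\nu,\sigma>0$, $d\in\mathbb{N}$, $a>0$, $w > a + \nu/d + 1/2$, a compact interval $[\beta_-,\beta_+]\subseteq(0,\infty)$ and $\beta^\dagger\in[\beta_-,\beta_+]$. Let $\{\lambda_j\},\{a_j\},\{\gamma_N\}$ be positive sequences with $\lambda_j\asymp j^{2/d}$, $a_j\asymp j^{-a}$, $\gamma_N\asymp N^{-w}$, define $\mu_j(\beta) = \beta^2\big((\beta/\sigma)^{2/\nu}+\lambda_j\big)^{-\nu-d/2}$ and $b_j^N(\beta) = \big(a_j^2\mu_j(\beta^\dagger)+\gamma_N^2\big)/\big(a_j^2\mu_j(\beta)+\gamma_N^2\big)$. Then the family $\{b_j^N(\beta) : 1\le j\le N,\ N\in\mathbb{N},\ \beta\in[\beta_-,\beta_+]\}$ is uniformly bounded, and there exists $L>0$ such that for all $N$ and all $1\le j\le N$ the map $\beta\mapsto b_j^N(\beta)$ is Lipschitz on $[\beta_-,\beta_+]$ with Lipschitz constant at most $L$. -/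
open Real Set

lemma aux_rpow_neg_lip {p m : ℝ} (hp : 0 < p) (hm : 0 < m) :
    ∀ u ∈ Set.Ici m, ∀ v ∈ Set.Ici m,
      |u ^ (-p) - v ^ (-p)| ≤ p * m ^ (-p - 1) * |u - v| := by
  intro u hu v hv
  have hderiv : ∀ x ∈ Set.Ici m, HasDerivWithinAt (fun t : ℝ => t ^ (-p))
      ((-p) * x ^ (-p - 1)) (Set.Ici m) x := by
    intro x hx
    have hx0 : x ≠ 0 := by have := lt_of_lt_of_le hm hx; linarith
    exact (Real.hasDerivAt_rpow_const (Or.inl hx0)).hasDerivWithinAt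
  have hbound : ∀ x ∈ Set.Ici m, ‖(-p) * x ^ (-p - 1)‖ ≤ p * m ^ (-p - 1) := by
    intro x hx
    have hx0 : 0 < x := lt_of_lt_of_le hm hx
    have h1 : x ^ (-p - 1) ≤ m ^ (-p - 1) :=
      Real.rpow_le_rpow_of_nonpos hm hx (by linarith)
    have h2 : (0:ℝ) ≤ x ^ (-p - 1) := (Real.rpow_pos_of_pos hx0 _).le
    rw [norm_mul, norm_neg, Real.norm_eq_abs, Real.norm_eq_abs, abs_of_pos hp,
      abs_of_nonneg h2]
    exact mul_le_mul_of_nonneg_left h1 hp.le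
  have := (convex_Ici m).norm_image_sub_le_of_norm_hasDerivWithin_le hderiv hbound hv hu
  simpa [Real.norm_eq_abs] using this

lemma aux_rpow_pos_lip {q lo hi : ℝ} (hq : 0 < q) (hlo : 0 < lo) :
    ∃ M : ℝ, 0 < M ∧ ∀ x ∈ Set.Icc lo hi, ∀ y ∈ Set.Icc lo hi,
      |x ^ q - y ^ q| ≤ M * |x - y| := by
  refine ⟨q * max (lo ^ (q - 1)) (hi ^ (q - 1)), ?_, ?_⟩
  · have : (0:ℝ) < lo ^ (q - 1) := Real.rpow_pos_of_pos hlo _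
    exact mul_pos hq (lt_max_of_lt_left this)
  intro x hx y hy
  have hderiv : ∀ z ∈ Set.Icc lo hi, HasDerivWithinAt (fun t : ℝ => t ^ q)
      (q * z ^ (q - 1)) (Set.Icc lo hi) z := by
    intro z hz
    have hz0 : z ≠ 0 := by have := lt_of_lt_of_le hlo hz.1; linarith
    exact (Real.hasDerivAt_rpow_const (Or.inl hz0)).hasDerivWithinAt
  have hbound : ∀ z ∈ Set.Icc lo hi, ‖q * z ^ (q - 1)‖ ≤
      q * max (lo ^ (q - 1)) (hi ^ (q - 1)) := by
    intro z hz
    have hz0 : 0 < z := lt_of_lt_of_le hlo hz.1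
    have h2 : (0:ℝ) ≤ z ^ (q - 1) := (Real.rpow_pos_of_pos hz0 _).le
    rw [norm_mul, Real.norm_eq_abs, Real.norm_eq_abs, abs_of_pos hq, abs_of_nonneg h2]
    refine mul_le_mul_of_nonneg_left ?_ hq.le
    rcases le_or_gt 1 q with h | h
    · exact le_max_of_le_right (Real.rpow_le_rpow hz0.le hz.2 (by linarith))
    · exact le_max_of_le_left (Real.rpow_le_rpow_of_nonpos hlo hz.1 (by linarith))
  have := (convex_Icc lo hi).norm_image_sub_le_of_norm_hasDerivWithin_le hderiv hbound hy hx
  simpa [Real.norm_eq_abs] using this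

lemma aux_ratio {p fm fp s t l : ℝ} (hp : 0 < p) (hfm : 0 < fm) (hfp : fm ≤ fp)
    (hl : 0 < l) (hs : fm ≤ s) (ht0 : fm ≤ t) (ht : t ≤ fp) :
    (s + l) ^ (-p) ≤ (fp / fm) ^ p * (t + l) ^ (-p) := by
  have hsl : (0:ℝ) < s + l := by linarith
  have htl : (0:ℝ) < t + l := by linarith
  have h1 : t + l ≤ fp / fm * (s + l) := by
    rw [div_mul_eq_mul_div, le_div_iff₀ hfm]
    nlinarith
  have h2 : (t + l) ^ p ≤ (fp / fm) ^ p * (s + l) ^ p := by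
    calc (t + l) ^ p ≤ (fp / fm * (s + l)) ^ p :=
          Real.rpow_le_rpow htl.le h1 hp.le
      _ = (fp / fm) ^ p * (s + l) ^ p := Real.mul_rpow (div_pos (lt_of_lt_of_le hfm hfp) hfm).le hsl.le
  have hsp : (0:ℝ) < (s + l) ^ p := Real.rpow_pos_of_pos hsl _
  have htp : (0:ℝ) < (t + l) ^ p := Real.rpow_pos_of_pos htl _
  have hC : (0:ℝ) < (fp / fm) ^ p :=
    Real.rpow_pos_of_pos (div_pos (lt_of_lt_of_le hfm hfp) hfm) _
  rw [Real.rpow_neg hsl.le, Real.rpow_neg htl.le]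
  have h3 : (t + l) ^ p / (fp / fm) ^ p ≤ (s + l) ^ p := by
    rw [div_le_iff₀ hC]; linarith [h2]
  calc ((s + l) ^ p)⁻¹ ≤ ((t + l) ^ p / (fp / fm) ^ p)⁻¹ :=
        inv_anti₀ (div_pos htp hC) h3
    _ = (fp / fm) ^ p * ((t + l) ^ p)⁻¹ := by rw [inv_div, div_eq_mul_inv]


set_option maxHeartbeats 1000000 in
/-- **Uniform boundedness and Lipschitz continuity of `b_j^N` (Lemma A.3 (vi)).**
For the Whittle–Matérn eigenvalues `μⱼ(β)` with `λⱼ ≍ j^{2/d}`, `aⱼ ≍ j^{-a}`,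
`γ_N ≍ N^{-w}` and `w > a + ν/d + 1/2`, the family
`b_j^N(β) = (aⱼ²μⱼ(β†)+γ_N²)/(aⱼ²μⱼ(β)+γ_N²)` for `1 ≤ j ≤ N`, `β ∈ [β₋, β₊]`,
is uniformly bounded and uniformly Lipschitz in `β`. -/
theorem whittle_matern_b_bounded_lipschitz
    (ν σ : ℝ) (hν : 0 < ν) (hσ : 0 < σ) (d : ℕ) (hd : 0 < d)
    (a w : ℝ) (ha : 0 < a) (hw : 0 < w)
    (hcond : a + ν / (d : ℝ) + 1 / 2 < w)
    (βm βp : ℝ) (hβm : 0 < βm) (hβmp : βm ≤ βp)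
    (βd : ℝ) (hβd : βd ∈ Set.Icc βm βp)
    (lam aj γ : ℕ → ℝ)
    (hlampos : ∀ j, 0 < lam j) (hajpos : ∀ j, 0 < aj j) (hγpos : ∀ N, 0 < γ N)
    (hlam : ∃ c₁ > (0 : ℝ), ∃ c₂ > (0 : ℝ), ∀ j : ℕ, 1 ≤ j →
      c₁ * (j : ℝ) ^ ((2 : ℝ) / (d : ℝ)) ≤ lam j ∧ lam j ≤ c₂ * (j : ℝ) ^ ((2 : ℝ) / (d : ℝ)))
    (haj : ∃ c₁ > (0 : ℝ), ∃ c₂ > (0 : ℝ), ∀ j : ℕ, 1 ≤ j →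
      c₁ * (j : ℝ) ^ (-a) ≤ aj j ∧ aj j ≤ c₂ * (j : ℝ) ^ (-a))
    (hγ : ∃ c₁ > (0 : ℝ), ∃ c₂ > (0 : ℝ), ∀ N : ℕ, 1 ≤ N →
      c₁ * (N : ℝ) ^ (-w) ≤ γ N ∧ γ N ≤ c₂ * (N : ℝ) ^ (-w))
    (μ : ℕ → ℝ → ℝ)
    (hμ : ∀ j β, μ j β = β ^ 2 * ((β / σ) ^ ((2 : ℝ) / ν) + lam j) ^ (-(ν + (d : ℝ) / 2)))
    (b : ℕ → ℕ → ℝ → ℝ)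
    (hb : ∀ j N β, b j N β =
      ((aj j) ^ 2 * μ j βd + (γ N) ^ 2) / ((aj j) ^ 2 * μ j β + (γ N) ^ 2)) :
    (∃ B : ℝ, 0 < B ∧ ∀ N : ℕ, ∀ j : ℕ, 1 ≤ j → j ≤ N →
        ∀ β ∈ Set.Icc βm βp, |b j N β| ≤ B) ∧
    (∃ L : ℝ, 0 < L ∧ ∀ N : ℕ, ∀ j : ℕ, 1 ≤ j → j ≤ N →
        ∀ x ∈ Set.Icc βm βp, ∀ y ∈ Set.Icc βm βp,
          |b j N x - b j N y| ≤ L * |x - y|) := by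
  clear hlam haj hγ hcond hw ha hd
  have hβp : 0 < βp := lt_of_lt_of_le hβm hβmp
  set q : ℝ := 2 / ν with hqdef
  have hq0 : 0 < q := by positivity
  set p : ℝ := ν + (d : ℝ) / 2 with hpdef
  have hp0 : 0 < p := by positivity
  have hμ' : ∀ j β, μ j β = β ^ 2 * ((β / σ) ^ q + lam j) ^ (-p) := hμ
  set fm : ℝ := (βm / σ) ^ q with hfmdef
  set Fp : ℝ := (βp / σ) ^ q with hFpdef
  have hfm0 : 0 < fm := Real.rpow_pos_of_pos (by positivity) q
  have hFp0 : 0 < Fp := Real.rpow_pos_of_pos (by positivity) q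
  have hfmFp : fm ≤ Fp :=
    Real.rpow_le_rpow (by positivity) (by gcongr) hq0.le
  have hfmem : ∀ β ∈ Set.Icc βm βp, fm ≤ (β / σ) ^ q ∧ (β / σ) ^ q ≤ Fp := by
    intro β hβ
    constructor
    · exact Real.rpow_le_rpow (by positivity) (by gcongr; exact hβ.1) hq0.le
    · have h0 : 0 < β := lt_of_lt_of_le hβm hβ.1
      exact Real.rpow_le_rpow (by positivity) (by gcongr; exact hβ.2) hq0.le
  set C : ℝ := (Fp / fm) ^ p with hCdef
  have hC0 : 0 < C := Real.rpow_pos_of_pos (div_pos hFp0 hfm0) _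
  have hC1 : 1 ≤ C := by
    have : (1:ℝ) = (1:ℝ) ^ p := (Real.one_rpow p).symm
    rw [this]
    exact Real.rpow_le_rpow (by norm_num) ((one_le_div hfm0).mpr hfmFp) hp0.le
  -- ratio bound on g
  have hg : ∀ j : ℕ, ∀ x ∈ Set.Icc βm βp, ∀ y ∈ Set.Icc βm βp,
      ((x / σ) ^ q + lam j) ^ (-p) ≤ C * ((y / σ) ^ q + lam j) ^ (-p) := by
    intro j x hx y hy
    exact aux_ratio hp0 hfm0 hfmFp (hlampos j) (hfmem x hx).1 (hfmem y hy).1 (hfmem y hy).2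
  have hgpos : ∀ j : ℕ, ∀ β : ℝ, 0 < β → (0:ℝ) < ((β / σ) ^ q + lam j) ^ (-p) := by
    intro j β hβ0
    have : (0:ℝ) ≤ (β / σ) ^ q := Real.rpow_nonneg (by positivity) _
    exact Real.rpow_pos_of_pos (by linarith [hlampos j]) _
  have hμpos : ∀ j : ℕ, ∀ β ∈ Set.Icc βm βp, 0 < μ j β := by
    intro j β hβ
    rw [hμ' j β]
    have h0 : 0 < β := lt_of_lt_of_le hβm hβ.1
    exact mul_pos (by positivity) (hgpos j β h0)
  -- ratio bound on μ
  set R : ℝ := (βp / βm) ^ 2 * C with hRdef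
  have hR0 : 0 < R := by positivity
  have hR1 : 1 ≤ R := by
    have h1 : (1:ℝ) ≤ (βp / βm) ^ 2 := by
      have : (1:ℝ) ≤ βp / βm := (one_le_div hβm).mpr hβmp
      nlinarith
    nlinarith
  have hμR : ∀ j : ℕ, ∀ x ∈ Set.Icc βm βp, ∀ y ∈ Set.Icc βm βp,
      μ j x ≤ R * μ j y := by
    intro j x hx y hy
    rw [hμ' j x, hμ' j y]
    have hx0 : 0 < x := lt_of_lt_of_le hβm hx.1
    have hy0 : 0 < y := lt_of_lt_of_le hβm hy.1
    have hx2 : x ^ 2 ≤ (βp / βm) ^ 2 * y ^ 2 := by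
      have h1 : x ≤ βp / βm * y := by
        rw [div_mul_eq_mul_div, le_div_iff₀ hβm]
        nlinarith [hx.2, hy.1]
      calc x ^ 2 ≤ (βp / βm * y) ^ 2 := by nlinarith
        _ = (βp / βm) ^ 2 * y ^ 2 := by ring
    calc x ^ 2 * ((x / σ) ^ q + lam j) ^ (-p)
        ≤ ((βp / βm) ^ 2 * y ^ 2) * (C * ((y / σ) ^ q + lam j) ^ (-p)) :=
          mul_le_mul hx2 (hg j x hx y hy) (hgpos j x hx0).le (by positivity)
      _ = R * (y ^ 2 * ((y / σ) ^ q + lam j) ^ (-p)) := by ring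
  -- denominators
  have hden : ∀ j N : ℕ, ∀ β ∈ Set.Icc βm βp, 0 < aj j ^ 2 * μ j β + γ N ^ 2 := by
    intro j N β hβ
    have h1 : 0 ≤ aj j ^ 2 * μ j β := mul_nonneg (sq_nonneg _) (hμpos j β hβ).le
    nlinarith [hγpos N]
  have hnum_le : ∀ j N : ℕ, ∀ β ∈ Set.Icc βm βp,
      aj j ^ 2 * μ j βd + γ N ^ 2 ≤ R * (aj j ^ 2 * μ j β + γ N ^ 2) := by
    intro j N β hβ
    have h1 : aj j ^ 2 * μ j βd ≤ R * (aj j ^ 2 * μ j β) := by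
      have := hμR j βd hβd β hβ
      nlinarith [sq_nonneg (aj j)]
    nlinarith [sq_nonneg (γ N), hγpos N]
  have hbabs : ∀ j N : ℕ, ∀ β ∈ Set.Icc βm βp, |b j N β| ≤ R := by
    intro j N β hβ
    rw [hb]
    rw [abs_of_nonneg (div_nonneg ?_ (hden j N β hβ).le)]
    · rw [div_le_iff₀ (hden j N β hβ)]
      exact hnum_le j N β hβ
    · have h1 : 0 < μ j βd := hμpos j βd hβd
      have h2 : 0 ≤ aj j ^ 2 * μ j βd := mul_nonneg (sq_nonneg _) h1.le
      nlinarith [sq_nonneg (γ N)]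
  refine ⟨⟨R, hR0, fun N j _ _ β hβ => hbabs j N β hβ⟩, ?_⟩
  -- Lipschitz part
  obtain ⟨M, hM0, hMlip⟩ := aux_rpow_pos_lip hq0 (show 0 < βm / σ by positivity) (hi := βp / σ)
  set Mf : ℝ := M / σ with hMfdef
  have hMf0 : 0 < Mf := by positivity
  have hflip : ∀ x ∈ Set.Icc βm βp, ∀ y ∈ Set.Icc βm βp,
      |(x / σ) ^ q - (y / σ) ^ q| ≤ Mf * |x - y| := by
    intro x hx y hy
    have hx' : x / σ ∈ Set.Icc (βm / σ) (βp / σ) :=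
      ⟨by gcongr; exact hx.1, by gcongr; exact hx.2⟩
    have hy' : y / σ ∈ Set.Icc (βm / σ) (βp / σ) :=
      ⟨by gcongr; exact hy.1, by gcongr; exact hy.2⟩
    calc |(x / σ) ^ q - (y / σ) ^ q| ≤ M * |x / σ - y / σ| := hMlip _ hx' _ hy'
      _ = Mf * |x - y| := by
          rw [div_sub_div_same, abs_div, abs_of_pos hσ, hMfdef]; ring
  -- Lipschitz bound for g
  have hglip : ∀ j : ℕ, ∀ x ∈ Set.Icc βm βp, ∀ y ∈ Set.Icc βm βp,
      |((x / σ) ^ q + lam j) ^ (-p) - ((y / σ) ^ q + lam j) ^ (-p)| ≤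
        (p * Mf * C / fm) * (((y / σ) ^ q + lam j) ^ (-p)) * |x - y| := by
    intro j x hx y hy
    have hml : 0 < fm + lam j := by linarith [hlampos j]
    have hx' : (x / σ) ^ q + lam j ∈ Set.Ici (fm + lam j) := by
      have := (hfmem x hx).1; simp only [Set.mem_Ici]; linarith
    have hy' : (y / σ) ^ q + lam j ∈ Set.Ici (fm + lam j) := by
      have := (hfmem y hy).1; simp only [Set.mem_Ici]; linarith
    have h1 : |((x / σ) ^ q + lam j) ^ (-p) - ((y / σ) ^ q + lam j) ^ (-p)| ≤
        p * (fm + lam j) ^ (-p - 1) * |(x / σ) ^ q - (y / σ) ^ q| := by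
      have := aux_rpow_neg_lip hp0 hml _ hx' _ hy'
      simpa using this
    -- bound (fm+λ)^(-p-1) ≤ (C/fm) * gy
    have h2 : (fm + lam j) ^ (-p - 1) ≤
        C / fm * ((y / σ) ^ q + lam j) ^ (-p) := by
      have e1 : (fm + lam j) ^ (-p - 1) =
          (fm + lam j)⁻¹ * (fm + lam j) ^ (-p) := by
        rw [show -p - 1 = (-1) + (-p) by ring, Real.rpow_add hml,
          Real.rpow_neg_one]
      rw [e1]
      have h3 : (fm + lam j)⁻¹ ≤ fm⁻¹ := by
        apply inv_anti₀ hfm0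
        linarith [hlampos j]
      have h4 : (fm + lam j) ^ (-p) ≤ C * ((y / σ) ^ q + lam j) ^ (-p) :=
        aux_ratio hp0 hfm0 hfmFp (hlampos j) le_rfl (hfmem y hy).1 (hfmem y hy).2
      calc (fm + lam j)⁻¹ * (fm + lam j) ^ (-p)
          ≤ fm⁻¹ * (C * ((y / σ) ^ q + lam j) ^ (-p)) :=
            mul_le_mul h3 h4 (Real.rpow_pos_of_pos hml _).le (by positivity)
        _ = C / fm * ((y / σ) ^ q + lam j) ^ (-p) := by ring
    calc |((x / σ) ^ q + lam j) ^ (-p) - ((y / σ) ^ q + lam j) ^ (-p)|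
        ≤ p * (fm + lam j) ^ (-p - 1) * |(x / σ) ^ q - (y / σ) ^ q| := h1
      _ ≤ p * (C / fm * ((y / σ) ^ q + lam j) ^ (-p)) * (Mf * |x - y|) := by
          apply mul_le_mul
          · exact mul_le_mul_of_nonneg_left h2 hp0.le
          · exact hflip x hx y hy
          · exact abs_nonneg _
          · have := (hgpos j y (lt_of_lt_of_le hβm hy.1)).le; positivity
      _ = (p * Mf * C / fm) * (((y / σ) ^ q + lam j) ^ (-p)) * |x - y| := by ring
  -- Lipschitz bound for μ
  set K : ℝ := 2 * βp * C / βm ^ 2 + p * Mf * C / fm with hKdef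
  have hK0 : 0 < K := by positivity
  have hμlip : ∀ j : ℕ, ∀ x ∈ Set.Icc βm βp, ∀ y ∈ Set.Icc βm βp,
      |μ j x - μ j y| ≤ K * μ j y * |x - y| := by
    intro j x hx y hy
    have hx0 : 0 < x := lt_of_lt_of_le hβm hx.1
    have hy0 : 0 < y := lt_of_lt_of_le hβm hy.1
    set gx : ℝ := ((x / σ) ^ q + lam j) ^ (-p) with hgxdef
    set gy : ℝ := ((y / σ) ^ q + lam j) ^ (-p) with hgydef
    have hgx0 : 0 < gx := hgpos j x hx0
    have hgy0 : 0 < gy := hgpos j y hy0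
    have hdecomp : μ j x - μ j y = (x ^ 2 - y ^ 2) * gx + y ^ 2 * (gx - gy) := by
      rw [hμ' j x, hμ' j y]; ring
    have ht1 : |(x ^ 2 - y ^ 2) * gx| ≤ (2 * βp * C / βm ^ 2) * μ j y * |x - y| := by
      rw [abs_mul, abs_of_pos hgx0]
      have e1 : |x ^ 2 - y ^ 2| ≤ 2 * βp * |x - y| := by
        have : x ^ 2 - y ^ 2 = (x + y) * (x - y) := by ring
        rw [this, abs_mul, abs_of_pos (by linarith : (0:ℝ) < x + y)]
        have : x + y ≤ 2 * βp := by linarith [hx.2, hy.2]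
        exact mul_le_mul_of_nonneg_right this (abs_nonneg _)
      have e2 : gx ≤ C * gy := hg j x hx y hy
      have e3 : βm ^ 2 * gy ≤ μ j y := by
        rw [hμ' j y]
        have : βm ^ 2 ≤ y ^ 2 := by nlinarith [hy.1]
        nlinarith
      calc |x ^ 2 - y ^ 2| * gx ≤ (2 * βp * |x - y|) * (C * gy) :=
            mul_le_mul e1 e2 hgx0.le (by positivity)
        _ = (2 * βp * C / βm ^ 2) * (βm ^ 2 * gy) * |x - y| := by
            field_simp
        _ ≤ (2 * βp * C / βm ^ 2) * μ j y * |x - y| := by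
            apply mul_le_mul_of_nonneg_right _ (abs_nonneg _)
            exact mul_le_mul_of_nonneg_left e3 (by positivity)
    have ht2 : |y ^ 2 * (gx - gy)| ≤ (p * Mf * C / fm) * μ j y * |x - y| := by
      rw [abs_mul, abs_of_pos (by positivity : (0:ℝ) < y ^ 2)]
      calc y ^ 2 * |gx - gy| ≤ y ^ 2 * ((p * Mf * C / fm) * gy * |x - y|) :=
            mul_le_mul_of_nonneg_left (hglip j x hx y hy) (by positivity)
        _ = (p * Mf * C / fm) * (y ^ 2 * gy) * |x - y| := by ring
        _ = (p * Mf * C / fm) * μ j y * |x - y| := by rw [hμ' j y]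
    calc |μ j x - μ j y| = |(x ^ 2 - y ^ 2) * gx + y ^ 2 * (gx - gy)| := by
          rw [hdecomp]
      _ ≤ |(x ^ 2 - y ^ 2) * gx| + |y ^ 2 * (gx - gy)| := abs_add_le _ _
      _ ≤ (2 * βp * C / βm ^ 2) * μ j y * |x - y| +
            (p * Mf * C / fm) * μ j y * |x - y| := add_le_add ht1 ht2
      _ = K * μ j y * |x - y| := by rw [hKdef]; ring
  refine ⟨R * K, by positivity, fun N j _ _ x hx y hy => ?_⟩
  have hDX := hden j N x hx
  have hDY := hden j N y hy
  have hdiff : b j N x - b j N y =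
      ((aj j ^ 2 * μ j βd + γ N ^ 2) * (aj j ^ 2 * (μ j y - μ j x))) /
        ((aj j ^ 2 * μ j x + γ N ^ 2) * (aj j ^ 2 * μ j y + γ N ^ 2)) := by
    rw [hb, hb]
    field_simp
    ring
  have hnum0 : 0 ≤ aj j ^ 2 * μ j βd + γ N ^ 2 := by
    have := hμpos j βd hβd
    nlinarith [sq_nonneg (aj j), hγpos N]
  rw [hdiff, abs_div, abs_mul,
    abs_of_pos (mul_pos hDX hDY), abs_of_nonneg hnum0]
  rw [div_le_iff₀ (mul_pos hDX hDY)]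
  have h1 : aj j ^ 2 * μ j βd + γ N ^ 2 ≤ R * (aj j ^ 2 * μ j x + γ N ^ 2) :=
    hnum_le j N x hx
  have h2 : |aj j ^ 2 * (μ j y - μ j x)| ≤
      K * (aj j ^ 2 * μ j y + γ N ^ 2) * |x - y| := by
    rw [abs_mul, abs_of_nonneg (sq_nonneg (aj j))]
    have h3 : |μ j y - μ j x| ≤ K * μ j y * |x - y| := by
      rw [abs_sub_comm]
      exact hμlip j x hx y hy
    calc aj j ^ 2 * |μ j y - μ j x| ≤ aj j ^ 2 * (K * μ j y * |x - y|) :=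
          mul_le_mul_of_nonneg_left h3 (sq_nonneg _)
      _ ≤ K * (aj j ^ 2 * μ j y + γ N ^ 2) * |x - y| := by
          nlinarith [mul_nonneg (mul_nonneg hK0.le (sq_nonneg (γ N))) (abs_nonneg (x - y))]
    -- end
  calc (aj j ^ 2 * μ j βd + γ N ^ 2) * |aj j ^ 2 * (μ j y - μ j x)|
      ≤ (R * (aj j ^ 2 * μ j x + γ N ^ 2)) *
          (K * (aj j ^ 2 * μ j y + γ N ^ 2) * |x - y|) :=
        mul_le_mul h1 h2 (abs_nonneg _) (by positivity)
    _ = R * K * |x - y| * ((aj j ^ 2 * μ j x + γ N ^ 2) *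
          (aj j ^ 2 * μ j y + γ N ^ 2)) := by ring
end

section
/- Under the data model and Assumptions below, for each fixed $\theta\in\Theta$ the random variables $\mathsf{J}_{\mathsf{C}}^{N}(\theta)$ converge in probability, as $N\to\infty$, to the deterministic limit $\mathsf{J}_{\mathsf{C}}(\theta) = \frac{1}{2}g(\theta) - \frac{1}{2}\log g(\theta)$. -/
open MeasureTheory ProbabilityTheory Filter

open Real
open scoped ENNReal NNReal Topology

lemma key_integral : ∫ x : ℝ, x ^ 2 * Real.exp (-(2⁻¹:ℝ) * x ^ 2) = Real.sqrt (2 * Real.pi) := by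
  have h1 : ∫ x : ℝ, x ^ 2 * Real.exp (-(2⁻¹:ℝ) * x ^ 2)
      = 2 * ∫ x in Set.Ioi (0:ℝ), x ^ 2 * Real.exp (-(2⁻¹:ℝ) * x ^ 2) := by
    rw [← integral_comp_abs (f := fun t : ℝ => t ^ 2 * Real.exp (-(2⁻¹:ℝ) * t ^ 2))]
    simp [sq_abs]
  have h2 : ∫ x in Set.Ioi (0:ℝ), x ^ 2 * Real.exp (-(2⁻¹:ℝ) * x ^ 2)
      = (2⁻¹:ℝ) ^ (-((2:ℝ) + 1) / 2) * (1 / 2) * Real.Gamma (((2:ℝ) + 1) / 2) := by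
    rw [← integral_rpow_mul_exp_neg_mul_rpow (by norm_num) (by norm_num : (-1:ℝ) < 2) (by norm_num : (0:ℝ) < 2⁻¹)]
    refine setIntegral_congr_fun measurableSet_Ioi (fun x hx => ?_)
    rw [← Real.rpow_natCast x 2]
    norm_num
  have hG : Real.Gamma (((2:ℝ) + 1) / 2) = Real.sqrt Real.pi / 2 := by
    rw [show ((2:ℝ)+1)/2 = 1/2 + 1 by norm_num, Real.Gamma_add_one (by norm_num),
      Real.Gamma_one_half_eq]
    ring
  have hpow : (2⁻¹:ℝ) ^ (-((2:ℝ) + 1) / 2) = 2 * Real.sqrt 2 := by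
    rw [show (-((2:ℝ)+1)/2) = -(3/2) by norm_num, Real.rpow_neg (by norm_num),
      Real.inv_rpow (by norm_num), inv_inv,
      show ((3:ℝ)/2) = 1 + 1/2 by norm_num, Real.rpow_add (by norm_num), Real.rpow_one,
      ← Real.sqrt_eq_rpow]
  rw [h1, h2, hG, hpow, Real.sqrt_mul (by norm_num)]
  ring

lemma key_integrable : Integrable (fun x : ℝ => x ^ 2 * Real.exp (-(2⁻¹:ℝ) * x ^ 2)) := by
  have h := integrable_rpow_mul_exp_neg_mul_sq (b := 2⁻¹) (by norm_num) (s := 2) (by norm_num)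
  refine h.congr (Eventually.of_forall fun x => ?_)
  show x ^ ((2:ℝ)) * Real.exp (-(2⁻¹:ℝ) * x ^ (2:ℕ)) = _
  rw [← Real.rpow_natCast x 2]
  norm_num

open scoped ENNReal NNReal Topology

lemma gauss_density_eq :
    gaussianReal 0 1 = (volume : Measure ℝ).withDensity
      (fun x => ((Real.toNNReal (gaussianPDFReal 0 1 x) : ℝ≥0) : ℝ≥0∞)) := by
  rw [gaussianReal_of_var_ne_zero 0 one_ne_zero]
  rfl

lemma pdf_mul_sq (x : ℝ) : gaussianPDFReal 0 1 x * x ^ 2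
    = (Real.sqrt (2 * Real.pi))⁻¹ * (x ^ 2 * Real.exp (-(2⁻¹:ℝ) * x ^ 2)) := by
  rw [gaussianPDFReal]
  push_cast
  rw [mul_one]
  rw [show ∀ y:ℝ, -(y-0)^2/(2*1) = -(2⁻¹:ℝ) * y^2 by intro y; ring]
  ring

lemma integrable_sq_gauss : Integrable (fun x : ℝ => x ^ 2) (gaussianReal 0 1) := by
  rw [gauss_density_eq, integrable_withDensity_iff_integrable_smul
    (measurable_gaussianPDFReal 0 1).real_toNNReal]
  refine (key_integrable.const_mul ((Real.sqrt (2 * Real.pi))⁻¹)).congr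
    (Eventually.of_forall fun x => ?_)
  simp only [NNReal.smul_def, Real.coe_toNNReal _ (gaussianPDFReal_nonneg 0 1 x), smul_eq_mul]
  rw [← pdf_mul_sq]

lemma integral_sq_gauss : ∫ x, x ^ 2 ∂(gaussianReal 0 1) = 1 := by
  rw [gauss_density_eq, integral_withDensity_eq_integral_smul
    (measurable_gaussianPDFReal 0 1).real_toNNReal]
  have : ∀ x : ℝ, (Real.toNNReal (gaussianPDFReal 0 1 x) : ℝ≥0) • x ^ 2
      = (Real.sqrt (2 * Real.pi))⁻¹ * (x ^ 2 * Real.exp (-(2⁻¹:ℝ) * x ^ 2)) := by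
    intro x
    simp only [NNReal.smul_def, Real.coe_toNNReal _ (gaussianPDFReal_nonneg 0 1 x), smul_eq_mul]
    rw [← pdf_mul_sq]
  simp_rw [this]
  rw [integral_const_mul, key_integral, inv_mul_cancel₀]
  positivity

/-- **Pointwise convergence in probability of the centred MAP functional.**
Under the diagonal data model `y_j^N = √(s_j^N(θ†)) ζ_j` with i.i.d. standard Gaussians,
if `min_{1≤j≤N} a_j² μ_j(θ)/γ_N² → ∞` and `g(θ) = lim_j μ_j(θ†)/μ_j(θ)` exists in `(0,∞)`,
then for each fixed `θ ∈ Θ`, `J_C^N(θ) → (1/2) g(θ) - (1/2) log g(θ)` in probability. -/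
theorem centred_functional_pointwise_limit
    {Ω : Type*} [MeasurableSpace Ω] (P : Measure Ω) [IsProbabilityMeasure P]
    (ζ : ℕ → Ω → ℝ) (hζmeas : ∀ j, Measurable (ζ j))
    (hζlaw : ∀ j, P.map (ζ j) = gaussianReal 0 1)
    (hζindep : iIndepFun ζ P)
    {k : ℕ} (Θ : Set (EuclideanSpace ℝ (Fin k))) (θd : EuclideanSpace ℝ (Fin k))
    (hθd : θd ∈ Θ)
    (a : ℕ → ℝ) (ha : ∀ j, 0 < a j)
    (μ : ℕ → EuclideanSpace ℝ (Fin k) → ℝ) (hμpos : ∀ j, ∀ θ ∈ Θ, 0 < μ j θ)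
    (γ : ℕ → ℝ) (hγ : ∀ N, 0 < γ N)
    (ρ₀ : EuclideanSpace ℝ (Fin k) → ℝ) (hρ₀pos : ∀ θ ∈ Θ, 0 < ρ₀ θ)
    (s : ℕ → ℕ → EuclideanSpace ℝ (Fin k) → ℝ)
    (hs : ∀ j N θ, s j N θ = (a j) ^ 2 * μ j θ + (γ N) ^ 2)
    (y : ℕ → ℕ → Ω → ℝ)
    (hy : ∀ j N ω, y j N ω = Real.sqrt (s j N θd) * ζ j ω)
    (J : ℕ → EuclideanSpace ℝ (Fin k) → Ω → ℝ)
    (hJ : ∀ N θ ω, J N θ ω =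
      (1 / (2 * (N : ℝ))) * ∑ j ∈ Finset.range N,
          ((y j N ω) ^ 2 / s j N θ - Real.log (μ j θd / μ j θ))
        - (1 / (N : ℝ)) * Real.log (ρ₀ θ))
    (hmin : ∀ θ ∈ Θ, ∀ M : ℝ, ∀ᶠ N : ℕ in atTop, ∀ j < N, M ≤ (a j) ^ 2 * μ j θ / (γ N) ^ 2)
    (g : EuclideanSpace ℝ (Fin k) → ℝ)
    (hg : ∀ θ ∈ Θ, Tendsto (fun j : ℕ => μ j θd / μ j θ) atTop (nhds (g θ)))
    (hgpos : ∀ θ ∈ Θ, 0 < g θ) :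
    ∀ θ ∈ Θ, ∀ ε > 0,
      Tendsto
        (fun N : ℕ => P {ω | ε < |J N θ ω - ((1 / 2) * g θ - (1 / 2) * Real.log (g θ))|})
        atTop (nhds 0) := by
  intro θ hθ ε hε
  have hsθ : ∀ j N, 0 < s j N θ := fun j N => by
    rw [hs]; have h1 := hμpos j θ hθ; have h2 := ha j; have h3 := hγ N; positivity
  have hsθd : ∀ j N, 0 < s j N θd := fun j N => by
    rw [hs]; have h1 := hμpos j θd hθd; have h2 := ha j; have h3 := hγ N; positivity
  set L : ℝ := (1 / 2) * g θ - (1 / 2) * Real.log (g θ) with hLdef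
  set T1 : ℕ → Ω → ℝ :=
    fun N ω => g θ / 2 * ((N : ℝ)⁻¹ * ∑ j ∈ Finset.range N, ζ j ω ^ 2 - 1) with hT1def
  set Y : ℕ → Ω → ℝ :=
    fun N ω => 1 / (2 * (N : ℝ)) *
      ∑ j ∈ Finset.range N, (s j N θd / s j N θ - g θ) * ζ j ω ^ 2 with hYdef
  set d : ℕ → ℝ := fun N => (1 / 2) * Real.log (g θ)
      - 1 / (2 * (N : ℝ)) * ∑ j ∈ Finset.range N, Real.log (μ j θd / μ j θ)
      - (1 / (N : ℝ)) * Real.log (ρ₀ θ) with hddef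
  -- the key algebraic identity
  have hkey : ∀ N ω, J N θ ω - L = T1 N ω + Y N ω + d N := by
    intro N ω
    have e1 : ∑ j ∈ Finset.range N, ((y j N ω) ^ 2 / s j N θ - Real.log (μ j θd / μ j θ))
        = (∑ j ∈ Finset.range N, (s j N θd / s j N θ) * ζ j ω ^ 2)
          - ∑ j ∈ Finset.range N, Real.log (μ j θd / μ j θ) := by
      rw [← Finset.sum_sub_distrib]
      refine Finset.sum_congr rfl fun j _ => ?_
      rw [hy, mul_pow, Real.sq_sqrt (hsθd j N).le]
      ring
    have e2 : ∑ j ∈ Finset.range N, (s j N θd / s j N θ - g θ) * ζ j ω ^ 2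
        = (∑ j ∈ Finset.range N, (s j N θd / s j N θ) * ζ j ω ^ 2)
          - g θ * ∑ j ∈ Finset.range N, ζ j ω ^ 2 := by
      rw [Finset.mul_sum, ← Finset.sum_sub_distrib]
      exact Finset.sum_congr rfl fun j _ => by ring
    rw [hJ, e1]
    simp only [hT1def, hYdef, hddef, hLdef]
    rw [e2]
    ring
  -- integrability and second moment of the Gaussians
  have hsqmeas : ∀ j, Measurable (fun ω => ζ j ω ^ 2) := fun j => (hζmeas j).pow_const 2
  have hm2 : Measurable (fun x : ℝ => x ^ 2) := measurable_id.pow_const 2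
  have hsq_int : ∀ j, Integrable (fun ω => ζ j ω ^ 2) P := by
    intro j
    have h1 : Integrable (fun x : ℝ => x ^ 2) (P.map (ζ j)) := by
      rw [hζlaw j]; exact integrable_sq_gauss
    exact (integrable_map_measure hm2.aestronglyMeasurable (hζmeas j).aemeasurable).mp h1
  have hsq_exp : ∀ j, ∫ ω, ζ j ω ^ 2 ∂P = 1 := by
    intro j
    have h2 : ∫ x, (fun x : ℝ => x ^ 2) x ∂(P.map (ζ j)) = ∫ ω, (ζ j ω) ^ 2 ∂P :=
      integral_map (hζmeas j).aemeasurable hm2.aestronglyMeasurable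
    rw [← h2, hζlaw j, integral_sq_gauss]
  -- strong law of large numbers for the squares
  have hpair : Pairwise (Function.onFun (IndepFun · · P) fun j ω => ζ j ω ^ 2) := by
    intro i j hij
    exact (hζindep.indepFun hij).comp (measurable_id.pow_const 2) (measurable_id.pow_const 2)
  have hid : ∀ i, IdentDistrib (fun ω => ζ i ω ^ 2) (fun ω => ζ 0 ω ^ 2) P P := by
    intro i
    have h0 : IdentDistrib (ζ i) (ζ 0) P P :=
      ⟨(hζmeas i).aemeasurable, (hζmeas 0).aemeasurable, by rw [hζlaw i, hζlaw 0]⟩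
    exact h0.comp (measurable_id.pow_const 2)
  have hslln := strong_law_ae (fun j ω => ζ j ω ^ 2) (hsq_int 0) hpair hid
  have h1lim : ∀ᵐ ω ∂P, Tendsto (fun N => T1 N ω) atTop (𝓝 0) := by
    filter_upwards [hslln] with ω hω
    have h2 : Tendsto (fun N : ℕ => (N : ℝ)⁻¹ * ∑ j ∈ Finset.range N, ζ j ω ^ 2)
        atTop (𝓝 1) := by
      have he : ∫ ω', ζ 0 ω' ^ 2 ∂P = 1 := hsq_exp 0
      simpa [smul_eq_mul, he] using hω
    have h3 := (h2.sub_const 1).const_mul (g θ / 2)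
    simp only [hT1def]
    simpa using h3
  have h1 : Tendsto (fun N => P {ω | ε / 3 ≤ |T1 N ω|}) atTop (𝓝 0) := by
    have hm : ∀ N, AEStronglyMeasurable (T1 N) P := by
      intro N
      apply Measurable.aestronglyMeasurable
      simp only [hT1def]
      exact (((Finset.measurable_sum _ fun j _ => hsqmeas j).const_mul _).sub
        measurable_const).const_mul _
    have ht := tendstoInMeasure_of_tendsto_ae hm (g := fun _ => (0 : ℝ)) h1lim
    have := tendstoInMeasure_iff_dist.mp ht (ε / 3) (by positivity)
    simpa only [Real.dist_eq, sub_zero] using this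
  -- bound on |1 - t j|
  obtain ⟨C, hCpos, hC⟩ : ∃ C : ℝ, 0 < C ∧ ∀ j, |1 - μ j θd / μ j θ| ≤ C := by
    obtain ⟨B, hB⟩ : BddAbove (Set.range fun j => |1 - μ j θd / μ j θ|) :=
      ((tendsto_const_nhds (x := (1 : ℝ)) (f := atTop)).sub (hg θ hθ)).abs.bddAbove_range
    exact ⟨max B 1, lt_max_of_lt_right one_pos,
      fun j => le_max_of_le_left (hB (Set.mem_range_self j))⟩
  -- comparison of the ratio with its limit ratio
  have hrt : ∀ N j, |s j N θd / s j N θ - μ j θd / μ j θ|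
      ≤ γ N ^ 2 / (a j ^ 2 * μ j θ) * |1 - μ j θd / μ j θ| := by
    intro N j
    have hB := mul_pos (pow_pos (ha j) 2) (hμpos j θ hθ)
    have hc := pow_pos (hγ N) 2
    have hμθ := hμpos j θ hθ
    have hμθd := hμpos j θd hθd
    have hsj := hsθ j N
    have heq : s j N θd / s j N θ - μ j θd / μ j θ
        = (γ N ^ 2 / s j N θ) * (1 - μ j θd / μ j θ) := by
      rw [hs, hs]
      have h1 : a j ^ 2 * μ j θ + γ N ^ 2 ≠ 0 := by positivity
      have h2 : μ j θ ≠ 0 := hμθ.ne'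
      field_simp
      ring
    rw [heq, abs_mul, abs_of_nonneg (div_nonneg hc.le hsj.le)]
    have hle : γ N ^ 2 / s j N θ ≤ γ N ^ 2 / (a j ^ 2 * μ j θ) := by
      apply div_le_div_of_nonneg_left hc.le hB
      rw [hs]; nlinarith
    exact mul_le_mul_of_nonneg_right hle (abs_nonneg _)
  -- the deterministic averaged error tends to 0
  have hcN : Tendsto (fun N : ℕ => 1 / (2 * (N : ℝ)) *
      ∑ j ∈ Finset.range N, |s j N θd / s j N θ - g θ|) atTop (𝓝 0) := by
    have hv : Tendsto (fun N : ℕ => (N : ℝ)⁻¹ *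
        ∑ j ∈ Finset.range N, |μ j θd / μ j θ - g θ|) atTop (𝓝 0) := by
      have h0 : Tendsto (fun j : ℕ => |μ j θd / μ j θ - g θ|) atTop (𝓝 0) := by
        have := ((hg θ hθ).sub (tendsto_const_nhds (x := g θ))).abs
        simpa using this
      simpa using h0.cesaro
    rw [NormedAddCommGroup.tendsto_nhds_zero]
    intro δ hδ
    have hMev := hmin θ hθ (4 * C / δ)
    have hvev : ∀ᶠ N : ℕ in atTop, (N : ℝ)⁻¹ *
        ∑ j ∈ Finset.range N, |μ j θd / μ j θ - g θ| < δ / 4 :=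
      (tendsto_order.1 hv).2 (δ / 4) (by positivity)
    filter_upwards [hMev, hvev, eventually_ge_atTop 1] with N hM hv4 hN1
    have hNpos : (0 : ℝ) < N := by exact_mod_cast hN1
    have hterm : ∀ j ∈ Finset.range N,
        |s j N θd / s j N θ - g θ| ≤ δ / 4 + |μ j θd / μ j θ - g θ| := by
      intro j hj
      have hj' := Finset.mem_range.mp hj
      have h1 : |s j N θd / s j N θ - g θ|
          ≤ |s j N θd / s j N θ - μ j θd / μ j θ| + |μ j θd / μ j θ - g θ| := by
        have := abs_sub_le (s j N θd / s j N θ) (μ j θd / μ j θ) (g θ)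
        exact this
      have hB := mul_pos (pow_pos (ha j) 2) (hμpos j θ hθ)
      have hc := pow_pos (hγ N) 2
      have hMj := hM j hj'
      have hMpos : (0 : ℝ) < 4 * C / δ := by positivity
      have h2 : γ N ^ 2 / (a j ^ 2 * μ j θ) ≤ δ / (4 * C) := by
        rw [div_le_div_iff₀ hB (by positivity)]
        rw [div_le_div_iff₀ hδ hc] at hMj
        nlinarith
      have h3 : |s j N θd / s j N θ - μ j θd / μ j θ| ≤ δ / 4 := by
        refine (hrt N j).trans ?_
        calc γ N ^ 2 / (a j ^ 2 * μ j θ) * |1 - μ j θd / μ j θ|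
            ≤ δ / (4 * C) * C := by
              apply mul_le_mul h2 (hC j) (abs_nonneg _) (by positivity)
          _ = δ / 4 := by field_simp
      linarith
    have hsum : ∑ j ∈ Finset.range N, |s j N θd / s j N θ - g θ|
        ≤ (N : ℝ) * (δ / 4) + ∑ j ∈ Finset.range N, |μ j θd / μ j θ - g θ| := by
      calc ∑ j ∈ Finset.range N, |s j N θd / s j N θ - g θ|
          ≤ ∑ j ∈ Finset.range N, (δ / 4 + |μ j θd / μ j θ - g θ|) :=
            Finset.sum_le_sum hterm
        _ = (N : ℝ) * (δ / 4) + ∑ j ∈ Finset.range N, |μ j θd / μ j θ - g θ| := by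
            rw [Finset.sum_add_distrib, Finset.sum_const, Finset.card_range]
            simp [nsmul_eq_mul]
    have hnonneg : (0 : ℝ) ≤ 1 / (2 * (N : ℝ)) *
        ∑ j ∈ Finset.range N, |s j N θd / s j N θ - g θ| := by
      apply mul_nonneg (by positivity)
      exact Finset.sum_nonneg fun j _ => abs_nonneg _
    rw [Real.norm_eq_abs, abs_of_nonneg hnonneg]
    have step : 1 / (2 * (N : ℝ)) * ∑ j ∈ Finset.range N, |s j N θd / s j N θ - g θ|
        ≤ 1 / (2 * (N : ℝ)) *
          ((N : ℝ) * (δ / 4) + ∑ j ∈ Finset.range N, |μ j θd / μ j θ - g θ|) :=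
      mul_le_mul_of_nonneg_left hsum (by positivity)
    have hrw : 1 / (2 * (N : ℝ)) *
          ((N : ℝ) * (δ / 4) + ∑ j ∈ Finset.range N, |μ j θd / μ j θ - g θ|)
        = δ / 8 + 1 / 2 * ((N : ℝ)⁻¹ * ∑ j ∈ Finset.range N, |μ j θd / μ j θ - g θ|) := by
      field_simp
      ring
    have hsum_nonneg : (0 : ℝ) ≤ ∑ j ∈ Finset.range N, |μ j θd / μ j θ - g θ| :=
      Finset.sum_nonneg fun j _ => abs_nonneg _
    calc 1 / (2 * (N : ℝ)) * ∑ j ∈ Finset.range N, |s j N θd / s j N θ - g θ|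
        ≤ δ / 8 + 1 / 2 * ((N : ℝ)⁻¹ * ∑ j ∈ Finset.range N, |μ j θd / μ j θ - g θ|) := by
          rw [← hrw]; exact step
      _ < δ / 8 + 1 / 2 * (δ / 4) := by
          have : (N : ℝ)⁻¹ * ∑ j ∈ Finset.range N, |μ j θd / μ j θ - g θ| < δ / 4 := hv4
          linarith
      _ < δ := by linarith
  -- Markov inequality part
  have hYint : ∀ N, Integrable (Y N) P := by
    intro N
    simp only [hYdef]
    exact (integrable_finset_sum _ fun j _ => (hsq_int j).const_mul _).const_mul _
  have hintY : ∀ N, ∫ ω, |Y N ω| ∂P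
      ≤ 1 / (2 * (N : ℝ)) * ∑ j ∈ Finset.range N, |s j N θd / s j N θ - g θ| := by
    intro N
    have hWint : Integrable
        (fun ω => ∑ j ∈ Finset.range N, |s j N θd / s j N θ - g θ| * ζ j ω ^ 2) P :=
      integrable_finset_sum _ fun j _ => (hsq_int j).const_mul _
    have hb : ∀ ω, |Y N ω| ≤ 1 / (2 * (N : ℝ)) *
        ∑ j ∈ Finset.range N, |s j N θd / s j N θ - g θ| * ζ j ω ^ 2 := by
      intro ω
      simp only [hYdef]
      rw [abs_mul, abs_of_nonneg (show (0:ℝ) ≤ 1 / (2 * (N:ℝ)) by positivity)]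
      refine mul_le_mul_of_nonneg_left ?_ (by positivity)
      refine (Finset.abs_sum_le_sum_abs _ _).trans (Finset.sum_le_sum fun j _ => ?_)
      rw [abs_mul, abs_of_nonneg (sq_nonneg (ζ j ω))]
    calc ∫ ω, |Y N ω| ∂P
        ≤ ∫ ω, 1 / (2 * (N : ℝ)) *
            ∑ j ∈ Finset.range N, |s j N θd / s j N θ - g θ| * ζ j ω ^ 2 ∂P :=
          integral_mono (hYint N).abs (hWint.const_mul _) hb
      _ = 1 / (2 * (N : ℝ)) * ∑ j ∈ Finset.range N, |s j N θd / s j N θ - g θ| := by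
          rw [integral_const_mul, integral_finset_sum _ fun j _ => (hsq_int j).const_mul _]
          congr 1
          refine Finset.sum_congr rfl fun j _ => ?_
          rw [integral_const_mul, hsq_exp j, mul_one]
  have h2 : Tendsto (fun N => P {ω | ε / 3 ≤ |Y N ω|}) atTop (𝓝 0) := by
    have hre : ∀ N, (P {ω | ε / 3 ≤ |Y N ω|}).toReal
        ≤ (1 / (2 * (N : ℝ)) * ∑ j ∈ Finset.range N, |s j N θd / s j N θ - g θ|) / (ε / 3) := by
      intro N
      rw [le_div_iff₀ (by positivity)]
      calc (P {ω | ε / 3 ≤ |Y N ω|}).toReal * (ε / 3)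
          = (ε / 3) * (P {ω | ε / 3 ≤ |Y N ω|}).toReal := mul_comm _ _
        _ ≤ ∫ ω, |Y N ω| ∂P :=
            mul_meas_ge_le_integral_of_nonneg (ae_of_all _ fun ω => abs_nonneg _)
              (hYint N).abs (ε / 3)
        _ ≤ _ := hintY N
    have hup : Tendsto (fun N : ℕ => (1 / (2 * (N : ℝ)) *
        ∑ j ∈ Finset.range N, |s j N θd / s j N θ - g θ|) / (ε / 3)) atTop (𝓝 0) := by
      have := hcN.div_const (ε / 3)
      simpa using this
    have htR : Tendsto (fun N => (P {ω | ε / 3 ≤ |Y N ω|}).toReal) atTop (𝓝 0) :=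
      tendsto_of_tendsto_of_tendsto_of_le_of_le tendsto_const_nhds hup
        (fun N => ENNReal.toReal_nonneg) hre
    have := ENNReal.tendsto_ofReal htR
    rw [ENNReal.ofReal_zero] at this
    exact this.congr fun N => ENNReal.ofReal_toReal (measure_ne_top P _)
  -- deterministic part
  have hd : Tendsto d atTop (𝓝 0) := by
    have hlog : Tendsto (fun j : ℕ => Real.log (μ j θd / μ j θ)) atTop (𝓝 (Real.log (g θ))) :=
      ((Real.continuousAt_log (hgpos θ hθ).ne').tendsto).comp (hg θ hθ)
    have hces := hlog.cesaro
    have hinv : Tendsto (fun N : ℕ => ((N : ℝ))⁻¹) atTop (𝓝 0) :=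
      tendsto_inv_atTop_nhds_zero_nat
    have hcomb : Tendsto (fun N : ℕ => (1 / 2) * Real.log (g θ)
        - (1 / 2) * ((N : ℝ)⁻¹ * ∑ j ∈ Finset.range N, Real.log (μ j θd / μ j θ))
        - (N : ℝ)⁻¹ * Real.log (ρ₀ θ)) atTop
        (𝓝 ((1 / 2) * Real.log (g θ) - (1 / 2) * Real.log (g θ) - 0 * Real.log (ρ₀ θ))) :=
      (tendsto_const_nhds.sub (hces.const_mul (1 / 2))).sub (hinv.mul_const _)
    have h0 : (1 / 2) * Real.log (g θ) - (1 / 2) * Real.log (g θ) - 0 * Real.log (ρ₀ θ)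
        = 0 := by ring
    rw [h0] at hcomb
    refine hcomb.congr fun N => ?_
    simp only [hddef]
    ring
  have hd3 : ∀ᶠ N in atTop, |d N| < ε / 3 := by
    have habs : Tendsto (fun N => |d N|) atTop (𝓝 0) := by simpa using hd.abs
    exact habs.eventually_lt_const (by positivity)
  -- assembling the three pieces
  have hsub : ∀ᶠ N in atTop, P {ω | ε < |J N θ ω - L|}
      ≤ P {ω | ε / 3 ≤ |T1 N ω|} + P {ω | ε / 3 ≤ |Y N ω|} := by
    filter_upwards [hd3] with N hdN
    refine le_trans (measure_mono ?_) (measure_union_le _ _)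
    intro ω hω
    simp only [Set.mem_setOf_eq, Set.mem_union]
    simp only [Set.mem_setOf_eq] at hω
    by_contra hcon
    push_neg at hcon
    obtain ⟨hA, hB⟩ := hcon
    have hkw := hkey N ω
    have h3 : |J N θ ω - L| ≤ |T1 N ω| + |Y N ω| + |d N| := by
      rw [hkw]
      exact (abs_add_le _ _).trans (add_le_add_left (abs_add_le _ _) _)
    linarith
  refine tendsto_of_tendsto_of_tendsto_of_le_of_le' tendsto_const_nhds ?_
    (Eventually.of_forall fun N => zero_le) hsub
  have := h1.add h2
  simpa using this
end
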